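/- arXiv:2605.28784 — 3 statements merged into one kernel-verified Lean document; each statement's English description precedes it below -/
import Mathlib

section
/- Let (K, ω) be a finite symplectic abelian group of exponent m, and let x ∈ K have order m. Then there exists y ∈ K of order m with ω(x, y) = e^{−2πi/m}, and the subgroup K₀ = ⟨x, y⟩ is isomorphic to ℤ/mℤ ⊕ ℤ/mℤ, with K = K₀ ⊕ K₀^⊥, where K₀^⊥ = {k ∈ K : ω(k, h) = 1 for all h ∈ K₀}. -/
open scoped Real

lemma zeta_zpow_eq_one_iff {m : ℕ} (hm : m ≠ 0) (n : ℤ) :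
    (Circle.exp (2 * π / m)) ^ n = 1 ↔ (m : ℤ) ∣ n := by
  have hζ : ∀ k : ℤ, (Circle.exp (2 * π / m)) ^ k = Circle.exp (2 * π / m * k) := by
    intro k
    have := map_zsmul Circle.expHom k (2 * π / m)
    simpa [Circle.expHom, ← ofMul_zpow, smul_eq_mul, mul_comm] using this.symm
  rw [hζ, Circle.exp_eq_one]
  have hm' : (m : ℝ) ≠ 0 := Nat.cast_ne_zero.mpr hm
  have hπ : π ≠ 0 := Real.pi_ne_zero
  constructor
  · rintro ⟨k, hk⟩
    refine ⟨k, ?_⟩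
    have : (n : ℝ) = m * k := by
      field_simp at hk
      nlinarith [hk, Real.pi_ne_zero, Real.pi_pos]
    exact_mod_cast this
  · rintro ⟨k, rfl⟩
    exact ⟨k, by field_simp; push_cast; ring⟩

lemma circle_mem_zpowers {m : ℕ} (hm : m ≠ 0) (c : Circle) (hc : c ^ m = 1) :
    c ∈ Subgroup.zpowers (Circle.exp (2 * π / m)) := by
  haveI : NeZero m := ⟨hm⟩
  have hprim := Complex.isPrimitiveRoot_exp m hm
  have hc' : (c : ℂ) ^ m = 1 := by
    rw [← Circle.coe_pow, hc]; rfl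
  obtain ⟨i, hi, hieq⟩ := hprim.eq_pow_of_pow_eq_one hc'
  refine ⟨(i : ℤ), ?_⟩
  apply Subtype.ext
  show ((Circle.exp (2 * π / m) ^ (i : ℤ) : Circle) : ℂ) = (c : ℂ)
  rw [zpow_natCast, Circle.coe_pow, ← hieq]
  congr 1
  rw [Circle.coe_exp]
  congr 1
  push_cast
  ring

/-- a finite symplectic abelian group splits off a standard
hyperbolic plane `ℤ/mℤ ⊕ ℤ/mℤ` generated by an element of maximal order
and a suitable partner. -/
theorem stmt1 {K : Type} [AddCommGroup K] [Fintype K]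
    (ω : K → K → Circle)
    (hbil₁ : ∀ x y z : K, ω (x + y) z = ω x z * ω y z)
    (hbil₂ : ∀ x y z : K, ω x (y + z) = ω x y * ω x z)
    (halt : ∀ x : K, ω x x = 1)
    (hnd : ∀ x : K, (∀ y : K, ω x y = 1) → x = 0)
    (m : ℕ) (hm : AddMonoid.exponent K = m)
    (x : K) (hx : addOrderOf x = m) :
    ∃ y : K, addOrderOf y = m ∧ ω x y = Circle.exp (-(2 * π) / m) ∧
      (Nonempty (↥(AddSubgroup.closure ({x, y} : Set K)) ≃+ (ZMod m × ZMod m))) ∧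
      ((AddSubgroup.closure ({x, y} : Set K) : Set K) ∩
          {k : K | ∀ h ∈ AddSubgroup.closure ({x, y} : Set K), ω k h = 1} = {0}) ∧
      (∀ k : K, ∃ a ∈ AddSubgroup.closure ({x, y} : Set K),
        ∃ b ∈ {k : K | ∀ h ∈ AddSubgroup.closure ({x, y} : Set K), ω k h = 1},
          k = a + b) := by
  classical
  have hm0 : m ≠ 0 := hm ▸ AddMonoid.exponent_ne_zero_of_finite
  haveI : NeZero m := ⟨hm0⟩
  set ζ : Circle := Circle.exp (2 * π / m) with hζdef
  have hζpow : ∀ n : ℤ, ζ ^ n = 1 ↔ (m : ℤ) ∣ n := zeta_zpow_eq_one_iff hm0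
  -- basic consequences of bilinearity
  have h0l : ∀ z, ω 0 z = 1 := by
    intro z
    have h := hbil₁ 0 0 z
    rw [add_zero] at h
    exact (left_eq_mul.mp h).symm ▸ rfl
  have h0r : ∀ z, ω z 0 = 1 := by
    intro z
    have h := hbil₂ z 0 0
    rw [add_zero] at h
    exact (left_eq_mul.mp h)
  have hnegl : ∀ a z : K, ω (-a) z = (ω a z)⁻¹ := by
    intro a z
    have h : ω a z * ω (-a) z = 1 := by rw [← hbil₁, add_neg_cancel, h0l]
    exact eq_inv_of_mul_eq_one_right h
  have hnegr : ∀ a z : K, ω z (-a) = (ω z a)⁻¹ := by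
    intro a z
    have h : ω z a * ω z (-a) = 1 := by rw [← hbil₂, add_neg_cancel, h0r]
    exact eq_inv_of_mul_eq_one_right h
  have hpowl : ∀ (n : ℤ) (a z : K), ω (n • a) z = ω a z ^ n := by
    intro n a z
    induction n using Int.induction_on with
    | zero => simpa using h0l z
    | succ k ih => rw [add_smul, one_smul, hbil₁, ih, zpow_add, zpow_one]
    | pred k ih =>
        rw [sub_smul, one_smul, sub_eq_add_neg, hbil₁, ih, hnegl, zpow_sub, zpow_one]
  have hpowr : ∀ (n : ℤ) (a z : K), ω z (n • a) = ω z a ^ n := by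
    intro n a z
    induction n using Int.induction_on with
    | zero => simpa using h0r z
    | succ k ih => rw [add_smul, one_smul, hbil₂, ih, zpow_add, zpow_one]
    | pred k ih =>
        rw [sub_smul, one_smul, sub_eq_add_neg, hbil₂, ih, hnegr, zpow_sub, zpow_one]
  have hskew : ∀ a b : K, ω b a = (ω a b)⁻¹ := by
    intro a b
    have h := halt (a + b)
    rw [hbil₁, hbil₂, hbil₂, halt, halt, one_mul, mul_one] at h
    exact eq_inv_of_mul_eq_one_right h
  have hzsm : ∀ a : K, (m : ℤ) • a = 0 := by
    intro a
    have : m • a = 0 := hm ▸ AddMonoid.exponent_nsmul_eq_zero a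
    simpa [natCast_zsmul] using this
  have hroot : ∀ a b : K, ω a b ^ (m : ℤ) = 1 := fun a b => by
    rw [← hpowl, hzsm, h0l]
  have hrootn : ∀ a b : K, ω a b ^ m = 1 := fun a b => by
    have := hroot a b; rwa [zpow_natCast] at this
  -- the character χ := ω x ·  has image the full group of m-th roots of unity
  let χ : Multiplicative K →* Circle :=
    { toFun := fun k => ω x k.toAdd
      map_one' := h0r x
      map_mul' := fun a b => hbil₂ x _ _ }
  have hrange_le : χ.range ≤ Subgroup.zpowers ζ := by
    rintro c ⟨k, rfl⟩
    exact circle_mem_zpowers hm0 _ (hrootn x k.toAdd)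
  haveI : Finite ↥(χ.range) := by
    have h1 : Finite ↥(Set.range χ) := (Set.finite_range χ).to_subtype
    exact Finite.of_injective (fun a => (⟨a.1, a.2⟩ : ↥(Set.range χ))) (by
      intro a b hab
      exact Subtype.ext (congrArg Subtype.val hab))
  have hcard_dvd : m ∣ Nat.card ↥(χ.range) := by
    set c := Nat.card ↥(χ.range) with hc
    have key : ∀ z : K, ω ((c : ℤ) • x) z = 1 := by
      intro z
      have h1 : (⟨ω x z, ⟨Multiplicative.ofAdd z, rfl⟩⟩ : ↥(χ.range)) ^ c = 1 :=
        pow_card_eq_one'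
      have h2 : ω x z ^ c = 1 := by
        have := congrArg (Subtype.val) h1
        simpa using this
      rw [hpowl, zpow_natCast]
      exact h2
    have h4 : (c : ℤ) • x = 0 := hnd _ (fun z => key z)
    have h5 : c • x = 0 := by simpa [natCast_zsmul] using h4
    have := addOrderOf_dvd_of_nsmul_eq_zero h5
    rwa [hx] at this
  have hζm : ζ ^ m = 1 := by
    have : ζ ^ (m : ℤ) = 1 := (hζpow m).mpr dvd_rfl
    rwa [zpow_natCast] at this
  have hζord : orderOf ζ = m := by
    have h1 : orderOf ζ ∣ m := orderOf_dvd_of_pow_eq_one hζm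
    have h2 : m ∣ orderOf ζ := by
      have := (hζpow (orderOf ζ)).mp (by rw [zpow_natCast]; exact pow_orderOf_eq_one ζ)
      exact_mod_cast this
    exact Nat.dvd_antisymm h1 h2
  have hcard_zp : Nat.card ↥(Subgroup.zpowers ζ) = m := by
    rw [Nat.card_zpowers, hζord]
  haveI : Finite ↥(Subgroup.zpowers ζ) :=
    (isOfFinOrder_iff_pow_eq_one.mpr ⟨m, Nat.pos_of_ne_zero hm0, hζm⟩).finite_zpowers.to_subtype
  have hrange_eq : χ.range = Subgroup.zpowers ζ := by
    apply Subgroup.eq_of_le_of_card_ge hrange_le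
    rw [hcard_zp]
    exact Nat.le_of_dvd Nat.card_pos hcard_dvd
  -- get the partner y
  have hζinv_mem : ζ⁻¹ ∈ χ.range := by rw [hrange_eq]; exact inv_mem (Subgroup.mem_zpowers ζ)
  obtain ⟨y', hy'⟩ := hζinv_mem
  set y : K := y'.toAdd with hydef
  have hωxy : ω x y = ζ⁻¹ := hy'
  have hωyx : ω y x = ζ := by rw [hskew, hωxy, inv_inv]
  -- order of y
  have hyord : addOrderOf y = m := by
    have h1 : addOrderOf y ∣ m := addOrderOf_dvd_of_nsmul_eq_zero (by
      have := hzsm y; simpa [natCast_zsmul] using this)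
    have h2 : m ∣ addOrderOf y := by
      have h3 : (addOrderOf y : ℤ) • y = 0 := by
        simpa [natCast_zsmul] using addOrderOf_nsmul_eq_zero y
      have h4 : ω x ((addOrderOf y : ℤ) • y) = 1 := by rw [h3]; exact h0r x
      rw [hpowr, hωxy, inv_zpow, ← zpow_neg] at h4
      have := (hζpow _).mp h4
      have := (dvd_neg).mp this
      exact_mod_cast this
    exact Nat.dvd_antisymm h1 h2
  -- value computations
  have hval_y : ∀ a b : ℤ, ω (a • x + b • y) y = (ζ ^ a)⁻¹ := fun a b => by
    rw [hbil₁, hpowl, hpowl, hωxy, halt, one_zpow, mul_one, inv_zpow]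
  have hval_x : ∀ a b : ℤ, ω (a • x + b • y) x = ζ ^ b := fun a b => by
    rw [hbil₁, hpowl, hpowl, hωyx, halt, one_zpow, one_mul]
  have hind : ∀ a b : ℤ, a • x + b • y = 0 → (m : ℤ) ∣ a ∧ (m : ℤ) ∣ b := by
    intro a b hab
    constructor
    · have h1 := hval_y a b
      rw [hab, h0l] at h1
      exact (hζpow a).mp (inv_eq_one.mp h1.symm)
    · have h1 := hval_x a b
      rw [hab, h0l] at h1
      exact (hζpow b).mp h1.symm
  have hkill : ∀ (a : ℤ) (k : K), (m : ℤ) ∣ a → a • k = 0 := by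
    rintro a k ⟨t, rfl⟩
    rw [mul_comm, mul_smul, hzsm, smul_zero]
  have hxmem : x ∈ AddSubgroup.closure ({x, y} : Set K) :=
    AddSubgroup.subset_closure (by simp)
  have hymem : y ∈ AddSubgroup.closure ({x, y} : Set K) :=
    AddSubgroup.subset_closure (by simp)
  refine ⟨y, hyord, ?_, ?_, ?_, ?_⟩
  · rw [hωxy, hζdef, ← Circle.exp_neg, neg_div]
  · -- the equivalence with ZMod m × ZMod m
    let fx : ZMod m →+ K := ZMod.lift m ⟨(zmultiplesHom K) x, by simpa using hzsm x⟩
    let fy : ZMod m →+ K := ZMod.lift m ⟨(zmultiplesHom K) y, by simpa using hzsm y⟩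
    let f : ZMod m × ZMod m →+ K :=
      fx.comp (AddMonoidHom.fst _ _) + fy.comp (AddMonoidHom.snd _ _)
    have hfval : ∀ a b : ℤ, f ((a : ZMod m), (b : ZMod m)) = a • x + b • y := by
      intro a b
      simp [f, fx, fy, ZMod.lift_coe, zmultiplesHom_apply]
    have hinj : Function.Injective f := by
      rw [injective_iff_map_eq_zero]
      rintro ⟨a, b⟩ hp
      obtain ⟨a', rfl⟩ := ZMod.intCast_surjective a
      obtain ⟨b', rfl⟩ := ZMod.intCast_surjective b
      rw [hfval] at hp
      obtain ⟨ha, hb⟩ := hind a' b' hp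
      rw [Prod.mk_eq_zero]
      exact ⟨(ZMod.intCast_zmod_eq_zero_iff_dvd a' m).mpr ha,
        (ZMod.intCast_zmod_eq_zero_iff_dvd b' m).mpr hb⟩
    have hrangef : f.range = AddSubgroup.closure ({x, y} : Set K) := by
      ext z
      rw [AddMonoidHom.mem_range, AddSubgroup.mem_closure_pair]
      constructor
      · rintro ⟨⟨a, b⟩, rfl⟩
        obtain ⟨a', rfl⟩ := ZMod.intCast_surjective a
        obtain ⟨b', rfl⟩ := ZMod.intCast_surjective b
        exact ⟨a', b', (hfval a' b').symm⟩
      · rintro ⟨a, b, rfl⟩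
        exact ⟨((a : ZMod m), (b : ZMod m)), hfval a b⟩
    exact ⟨(AddEquiv.addSubgroupCongr hrangef.symm).trans (AddMonoidHom.ofInjective hinj).symm⟩
  · -- trivial intersection
    apply Set.eq_singleton_iff_unique_mem.mpr
    constructor
    · exact ⟨AddSubgroup.zero_mem _, fun h _ => h0l h⟩
    · rintro k ⟨hk1, hk2⟩
      obtain ⟨a, b, rfl⟩ := (AddSubgroup.mem_closure_pair).mp hk1
      have h1 := hk2 y hymem
      rw [hval_y] at h1
      have ha : (m : ℤ) ∣ a := (hζpow a).mp (inv_eq_one.mp h1)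
      have h2 := hk2 x hxmem
      rw [hval_x] at h2
      have hb : (m : ℤ) ∣ b := (hζpow b).mp h2
      rw [hkill a x ha, hkill b y hb, add_zero]
  · -- the splitting
    intro k
    obtain ⟨s, hs⟩ := circle_mem_zpowers hm0 _ (hrootn k y)
    obtain ⟨t, ht⟩ := circle_mem_zpowers hm0 _ (hrootn k x)
    refine ⟨(-s) • x + t • y, (AddSubgroup.mem_closure_pair).mpr ⟨-s, t, rfl⟩,
      k - ((-s) • x + t • y), ?_, by abel⟩
    have hx1 : ω (k - ((-s) • x + t • y)) x = 1 := by
      rw [sub_eq_add_neg, hbil₁, hnegl, hval_x (-s) t, ← ht, ← hζdef, mul_inv_cancel]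
    have hy1 : ω (k - ((-s) • x + t • y)) y = 1 := by
      rw [sub_eq_add_neg, hbil₁, hnegl, hval_y (-s) t, ← hs, ← hζdef]
      simp [zpow_neg]
    intro h hh
    obtain ⟨p, q, rfl⟩ := (AddSubgroup.mem_closure_pair).mp hh
    rw [hbil₂, hpowr, hpowr, hx1, hy1, one_zpow, one_zpow, one_mul]
end

section
/- Let (K, ω) be a finite symplectic abelian group of exponent m with Heisenberg group ℋ. Then the abstract Pauli group 𝒫 = {h ∈ ℋ : h^{2m} = 1} is a finite subgroup of ℋ of order 2m·|K|. -/
/-- for a Heisenberg group `ℋ` over a finite symplectic abelian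
group `(K, ω)` of exponent `m`, the abstract Pauli group
`𝒫 = {h ∈ ℋ : h^{2m} = 1}` is a finite subgroup of order `2m·|K|`. -/
theorem stmt9 {K : Type} [AddCommGroup K] [Fintype K]
    (ω : K → K → Circle)
    (hbil₁ : ∀ x y z : K, ω (x + y) z = ω x z * ω y z)
    (hbil₂ : ∀ x y z : K, ω x (y + z) = ω x y * ω x z)
    (halt : ∀ x : K, ω x x = 1)
    (hnd : ∀ x : K, (∀ y : K, ω x y = 1) → x = 0)
    {H : Type} [Group H]
    (i : Circle →* H) (hi : Function.Injective i)
    (hcent : ∀ (z : Circle) (h : H), i z * h = h * i z)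
    (p : H → K) (hp : ∀ g h : H, p (g * h) = p g + p h)
    (hps : Function.Surjective p)
    (hker : ∀ h : H, p h = 0 ↔ h ∈ Set.range i)
    (hcomm : ∀ g h : H, g * h * g⁻¹ * h⁻¹ = i (ω (p g) (p h)))
    (m : ℕ) (hm : AddMonoid.exponent K = m) :
    ∃ P : Subgroup H,
      (P : Set H) = {h : H | h ^ (2 * m) = 1} ∧
      (P : Set H).Finite ∧
      Nat.card P = 2 * m * Nat.card K := by
  have hm0 : m ≠ 0 := hm ▸ AddMonoid.exponent_ne_zero_of_finite
  set n : ℕ := 2 * m with hn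
  have hn0 : n ≠ 0 := by omega
  haveI : NeZero n := ⟨hn0⟩
  -- basic facts about p
  have hp1 : p 1 = 0 := by
    have h0 := hp 1 1; rw [mul_one] at h0
    exact (left_eq_add.mp h0)
  have hpi : ∀ z : Circle, p (i z) = 0 := fun z => (hker (i z)).mpr ⟨z, rfl⟩
  have hpinv : ∀ h : H, p h⁻¹ = - p h := by
    intro h
    have h1 := hp h h⁻¹; rw [mul_inv_cancel, hp1] at h1
    exact eq_neg_of_add_eq_zero_right h1.symm
  have hppow : ∀ (h : H) (k : ℕ), p (h ^ k) = k • p h := by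
    intro h k
    induction k with
    | zero => simpa using hp1
    | succ k ih => rw [pow_succ, hp (h ^ k) h, ih, succ_nsmul]
  -- basic facts about ω
  have hω0 : ∀ z : K, ω 0 z = 1 := by
    intro z
    have h0 := hbil₁ 0 0 z; rw [add_zero] at h0
    exact (left_eq_mul.mp h0)
  have hωsmul : ∀ (x y : K) (k : ℕ), ω (k • x) y = ω x y ^ k := by
    intro x y k
    induction k with
    | zero => simpa using hω0 y
    | succ k ih => rw [succ_nsmul, hbil₁, ih, pow_succ]
  have hmx : ∀ x : K, m • x = 0 := fun x => hm ▸ AddMonoid.exponent_nsmul_eq_zero x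
  have hzm : ∀ a b : H, i (ω (p a) (p b)) ^ m = 1 := by
    intro a b
    rw [← map_pow, ← hωsmul, hmx, hω0, map_one]
  have hswap : ∀ a b : H, b * a = (i (ω (p a) (p b)))⁻¹ * (a * b) := by
    intro a b
    have hc := hcomm a b
    rw [← hc]; group
  -- power of product formula
  have hkey : ∀ (a b : H) (k : ℕ),
      (a * b) ^ k = (i (ω (p a) (p b)))⁻¹ ^ k.choose 2 * a ^ k * b ^ k := by
    intro a b k
    set z : H := i (ω (p a) (p b)) with hz
    have hzC : ∀ h : H, Commute z h := fun h => hcent _ h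
    have hba : ∀ j : ℕ, b ^ j * a = z⁻¹ ^ j * (a * b ^ j) := by
      intro j
      induction j with
      | zero => simp
      | succ j ih =>
        have hcj : b ^ j * z⁻¹ = z⁻¹ * b ^ j := ((hzC (b ^ j)).inv_left).eq.symm
        calc b ^ (j+1) * a = b ^ j * (b * a) := by rw [pow_succ, mul_assoc]
          _ = b ^ j * (z⁻¹ * (a * b)) := by rw [hswap a b]
          _ = (b ^ j * z⁻¹) * (a * b) := by rw [mul_assoc]
          _ = z⁻¹ * ((b ^ j * a) * b) := by rw [hcj]; group
          _ = z⁻¹ * ((z⁻¹ ^ j * (a * b ^ j)) * b) := by rw [ih]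
          _ = z⁻¹ ^ (j+1) * (a * b ^ (j+1)) := by rw [pow_succ z⁻¹, pow_succ b]; group
    induction k with
    | zero => simp
    | succ k ih =>
      have hcc : (k+1).choose 2 = k.choose 2 + k := by
        rw [Nat.choose_succ_succ, Nat.choose_one_right, add_comm]
      have hak : a ^ k * z⁻¹ ^ k = z⁻¹ ^ k * a ^ k :=
        (((hzC (a ^ k)).inv_left).pow_left k).eq.symm
      calc (a * b) ^ (k+1) = (a * b) ^ k * (a * b) := pow_succ _ _
        _ = z⁻¹ ^ k.choose 2 * a ^ k * b ^ k * (a * b) := by rw [ih]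
        _ = z⁻¹ ^ k.choose 2 * a ^ k * (b ^ k * a) * b := by group
        _ = z⁻¹ ^ k.choose 2 * a ^ k * (z⁻¹ ^ k * (a * b ^ k)) * b := by rw [hba k]
        _ = z⁻¹ ^ k.choose 2 * (a ^ k * z⁻¹ ^ k) * (a * b ^ k) * b := by group
        _ = z⁻¹ ^ k.choose 2 * (z⁻¹ ^ k * a ^ k) * (a * b ^ k) * b := by rw [hak]
        _ = z⁻¹ ^ (k+1).choose 2 * a ^ (k+1) * b ^ (k+1) := by
            rw [hcc, pow_add, pow_succ a, pow_succ b]; group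
  -- the Pauli subgroup
  have hchoose : n.choose 2 = m * (n - 1) := by
    rw [Nat.choose_two_right, hn, show 2 * m * (2 * m - 1) = 2 * (m * (2 * m - 1)) by ring]
    simp [Nat.mul_div_cancel_left]
  -- roots of unity in the circle
  have hcpow : ∀ (t : Circle) (k : ℕ), ((t ^ k : Circle) : ℂ) = (t : ℂ) ^ k :=
    fun t k => map_pow Circle.coeHom t k
  have hexp_pow : ∀ (θ : ℝ) (k : ℕ), Circle.exp θ ^ k = Circle.exp (k * θ) := by
    intro θ k
    induction k with
    | zero => simp
    | succ k ih =>
      rw [pow_succ, ih, ← Circle.exp_add]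
      congr 1; push_cast; ring
  have hroot : ∀ u : Circle, ∃ t : Circle, t ^ n = u := by
    intro u
    refine ⟨Circle.exp (Complex.arg u / n), ?_⟩
    rw [hexp_pow, mul_div_cancel₀ _ (by exact_mod_cast hn0 : (n : ℝ) ≠ 0), Circle.exp_arg]
  set ζ : Circle := Circle.exp (2 * Real.pi / n) with hζdef
  have hζc : (ζ : ℂ) = Complex.exp (2 * Real.pi * Complex.I / n) := by
    rw [hζdef, Circle.coe_exp]
    congr 1; push_cast; ring
  have hζprim : IsPrimitiveRoot ζ n := by
    have h1 := Complex.isPrimitiveRoot_exp n hn0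
    rw [← hζc] at h1
    exact IsPrimitiveRoot.of_map_of_injective (f := Circle.coeHom) h1 Circle.coe_injective
  have hupow : ∀ u : Circle, u ^ n = 1 → ∃ j : Fin n, ζ ^ (j : ℕ) = u := by
    intro u hu
    have huc : (u : ℂ) ^ n = 1 := by rw [← hcpow, hu, Circle.coe_one]
    obtain ⟨j, hjn, hj⟩ := (Complex.isPrimitiveRoot_exp n hn0).eq_pow_of_pow_eq_one huc
    refine ⟨⟨j, hjn⟩, Circle.coe_injective ?_⟩
    rw [hcpow, hζc, hj]
  -- a section of p consisting of (2m)-torsion elements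
  obtain ⟨s, hs⟩ := hps.hasRightInverse
  have hsn : ∀ x : K, p (s x ^ n) = 0 := by
    intro x
    rw [hppow, hn, ← smul_smul, hmx, smul_zero]
  choose c hc using fun x : K => (hker (s x ^ n)).mp (hsn x)
  choose rt hrt using hroot
  set e : K → H := fun x => s x * i (rt (c x)⁻¹) with he
  have hmulpow : ∀ (h : H) (t : Circle) (k : ℕ), (h * i t) ^ k = h ^ k * i (t ^ k) := by
    intro h t k
    have hct : Commute h (i t) := (hcent t h).symm
    rw [hct.mul_pow, map_pow]
  have hen : ∀ x : K, e x ^ n = 1 := by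
    intro x
    rw [he]
    simp only []
    rw [hmulpow, hrt ((c x)⁻¹), ← hc x, ← map_mul, mul_inv_cancel, map_one]
  have hpe : ∀ x : K, p (e x) = x := by
    intro x
    rw [he]
    simp only []
    rw [hp, hpi, add_zero, hs x]
  have hpF : ∀ (x : K) (t : Circle), p (e x * i t) = x := by
    intro x t
    rw [hp (e x) (i t), hpi, add_zero, hpe]
  have hFmem : ∀ (j : Fin n) (x : K), (e x * i (ζ ^ (j : ℕ))) ^ n = 1 := by
    intro j x
    rw [hmulpow, hen, one_mul, ← pow_mul, mul_comm (j : ℕ) n, pow_mul, hζprim.pow_eq_one,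
      one_pow, map_one]
  have hsurj : ∀ g : H, g ^ n = 1 → ∃ (j : Fin n) (x : K), e x * i (ζ ^ (j : ℕ)) = g := by
    intro g hg
    obtain ⟨u, hu⟩ : ∃ u, i u = g * (e (p g))⁻¹ :=
      (hker _).mp (by rw [hp, hpinv, hpe, add_neg_cancel])
    have hgu : g = e (p g) * i u := by
      rw [← hcent u (e (p g)), hu]; group
    have hun : u ^ n = 1 := by
      have hg2 := hg
      rw [hgu, hmulpow, hen, one_mul] at hg2
      exact hi (by rw [hg2, map_one])
    obtain ⟨j, hj⟩ := hupow u hun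
    exact ⟨j, p g, by rw [hj, ← hgu]⟩
  refine ⟨{ carrier := {h : H | h ^ n = 1}
            one_mem' := one_pow n
            mul_mem' := ?_
            inv_mem' := ?_ }, rfl, ?_, ?_⟩
  · intro a b ha hb
    simp only [Set.mem_setOf_eq] at ha hb ⊢
    rw [hkey a b n, ha, hb, mul_one, mul_one, hchoose, pow_mul, inv_pow, hzm, inv_one, one_pow]
  · intro a ha
    simp only [Set.mem_setOf_eq] at ha ⊢
    rw [inv_pow, ha, inv_one]
  · apply Set.Finite.subset
      (Set.finite_range (fun jx : Fin n × K => e jx.2 * i (ζ ^ ((jx.1 : Fin n) : ℕ))))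
    intro g hg
    obtain ⟨j, x, hjx⟩ := hsurj g hg
    exact ⟨(j, x), hjx⟩
  · have hb : Function.Bijective
        (fun jx : Fin n × K =>
          (⟨e jx.2 * i (ζ ^ ((jx.1 : Fin n) : ℕ)), hFmem jx.1 jx.2⟩ : {h : H // h ^ n = 1})) := by
      constructor
      · rintro ⟨j, x⟩ ⟨k, y⟩ hjk
        simp only [Subtype.mk.injEq] at hjk
        have hxy : x = y := by
          have h4 := congrArg p hjk
          rwa [hpF, hpF] at h4
        subst hxy
        have h2 : i (ζ ^ (j : ℕ)) = i (ζ ^ (k : ℕ)) := mul_left_cancel hjk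
        have h3 : (j : ℕ) = (k : ℕ) := hζprim.pow_inj j.2 k.2 (hi h2)
        exact Prod.ext (Fin.ext h3) rfl
      · rintro ⟨g, hg⟩
        obtain ⟨j, x, hjx⟩ := hsurj g hg
        exact ⟨(j, x), Subtype.ext hjx⟩
    have heq : Nat.card {h : H // h ^ n = 1} = Nat.card (Fin n × K) :=
      (Nat.card_eq_of_bijective _ hb).symm
    calc Nat.card {h : H // h ^ n = 1} = Nat.card (Fin n × K) := heq
      _ = n * Nat.card K := by simp [Nat.card_eq_fintype_card]
end

section
/- Let (M, u, α) ∈ Mp(V) ⋉ ℍ(V) be an element of the extended metaplectic group. Then (M, u, α) normalizes the subgroup Λ_ν = {(1, λ, ν(λ)⁻¹) : λ ∈ Λ} if and only if M preserves Λ (i.e. MΛ = Λ) and ν(Mλ)/ν(λ) = e^{2πiE(u, Mλ)} for all λ ∈ Λ. Consequently the normalizer equals {(M, u_M + μ, α) : MΛ = Λ, μ ∈ Λ^⊥, α ∈ U(1)}, where u_M ∈ V/Λ^⊥ is the unique class with ν(Mλ)/ν(λ) = e^{2πiE(u_M, Mλ)} for all λ. -/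
open scoped Real

namespace Stmt11

variable {V : Type} [AddCommGroup V] [Module ℝ V]

/-- The symplectic dual `Λ^⊥ = {v : E(v, Λ) ⊆ ℤ}`. -/
def Lperp (E : V →ₗ[ℝ] V →ₗ[ℝ] ℝ) (Λ : AddSubgroup V) : Set V :=
  {v : V | ∀ l ∈ Λ, ∃ k : ℤ, E v l = (k : ℝ)}

/-- The subgroup `Λ_ν = {(λ, ν(λ)⁻¹)} ⊂ ℍ(V)`, as a set. -/
def LnuSet (Λ : AddSubgroup V) (ν : V → Circle) : Set (V × Circle) :=
  {x | ∃ l ∈ Λ, x = (l, (ν l)⁻¹)}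

/-- The image of `Λ_ν` under conjugation by the extended metaplectic element
`(M, u, α)`, using `(M,u,α)(1,λ,γ)(M,u,α)⁻¹ = (1, Mλ, γ e^{−2πiE(u,Mλ)})`. -/
noncomputable def conjLnuSet (E : V →ₗ[ℝ] V →ₗ[ℝ] ℝ) (Λ : AddSubgroup V)
    (ν : V → Circle) (M : V ≃ₗ[ℝ] V) (u : V) : Set (V × Circle) :=
  {x | ∃ l ∈ Λ, x = (M l, (ν l)⁻¹ * Circle.exp (-(2 * π * E u (M l))))}

theorem aux1 (E : V →ₗ[ℝ] V →ₗ[ℝ] ℝ) (Λ : AddSubgroup V) (ν : V → Circle)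
    (M : V ≃ₗ[ℝ] V) (u : V) :
    conjLnuSet E Λ ν M u = LnuSet Λ ν ↔
      ((⇑M) '' (Λ : Set V) = (Λ : Set V) ∧
        ∀ l ∈ Λ, ν (M l) * (ν l)⁻¹ = Circle.exp (2 * π * E u (M l))) := by
  constructor
  · intro h
    have hrel : ∀ l ∈ Λ, ν (M l) * (ν l)⁻¹ = Circle.exp (2 * π * E u (M l)) ∧ M l ∈ Λ := by
      intro l hl
      have hx : (M l, (ν l)⁻¹ * Circle.exp (-(2 * π * E u (M l)))) ∈ LnuSet Λ ν := by
        rw [← h]; exact ⟨l, hl, rfl⟩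
      obtain ⟨l', hl', hx⟩ := hx
      have h1 : M l = l' := congrArg Prod.fst hx
      have h2 : (ν l)⁻¹ * Circle.exp (-(2 * π * E u (M l))) = (ν (M l))⁻¹ := by
        have := congrArg Prod.snd hx; rw [← h1] at this; exact this
      refine ⟨?_, h1 ▸ hl'⟩
      rw [Circle.exp_neg] at h2
      have := congrArg (fun z => ν (M l) * z * Circle.exp (2 * π * E u (M l))) h2
      simpa [mul_assoc, mul_comm, mul_left_comm, eq_comm] using this
    constructor
    · apply Set.Subset.antisymm
      · rintro x ⟨l, hl, rfl⟩; exact (hrel l hl).2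
      · intro l hl
        have hx : ((l : V), (ν l)⁻¹) ∈ conjLnuSet E Λ ν M u := by
          rw [h]; exact ⟨l, hl, rfl⟩
        obtain ⟨l', hl', hx⟩ := hx
        exact ⟨l', hl', (congrArg Prod.fst hx).symm⟩
    · exact fun l hl => (hrel l hl).1
  · rintro ⟨hΛ, hrel⟩
    ext x
    constructor
    · rintro ⟨l, hl, rfl⟩
      refine ⟨M l, ?_, ?_⟩
      · show M l ∈ (Λ : Set V); rw [← hΛ]; exact ⟨l, hl, rfl⟩
      · have := hrel l hl
        have h2 : (ν (M l))⁻¹ = (ν l)⁻¹ * Circle.exp (-(2 * π * E u (M l))) := by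
          rw [Circle.exp_neg]
          have := congrArg (fun z => z⁻¹ * (ν l)⁻¹) this
          simpa [mul_assoc, mul_comm, mul_left_comm] using this
        rw [h2]
    · rintro ⟨l, hl, rfl⟩
      have : (l : V) ∈ (⇑M) '' (Λ : Set V) := by rw [hΛ]; exact hl
      obtain ⟨l', hl', rfl⟩ := this
      refine ⟨l', hl', ?_⟩
      have := hrel l' hl'
      have h2 : (ν (M l'))⁻¹ = (ν l')⁻¹ * Circle.exp (-(2 * π * E u (M l'))) := by
        rw [Circle.exp_neg]
        have := congrArg (fun z => z⁻¹ * (ν l')⁻¹) this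
        simpa [mul_assoc, mul_comm, mul_left_comm] using this
      rw [h2]

/-- `(M, u, α)` normalizes `Λ_ν` iff `MΛ = Λ` and
`ν(Mλ)/ν(λ) = e^{2πiE(u,Mλ)}` for all `λ ∈ Λ`; consequently, for `M` with
`MΛ = Λ` there is `u_M`, unique modulo `Λ^⊥`, with
`ν(Mλ)/ν(λ) = e^{2πiE(u_M,Mλ)}`, and the normalizer consists exactly of the
elements `(M, u_M + μ, α)` with `μ ∈ Λ^⊥`, `α ∈ U(1)`. -/
theorem stmt11 (E : V →ₗ[ℝ] V →ₗ[ℝ] ℝ)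
    (halt : ∀ v : V, E v v = 0)
    (hnd : ∀ v : V, (∀ w : V, E v w = 0) → v = 0)
    [FiniteDimensional ℝ V]
    (Λ : AddSubgroup V) (k : ℕ) (b : Module.Basis (Fin k) ℝ V)
    (hb : Λ = AddSubgroup.closure (Set.range b))
    (hΛint : (Λ : Set V) ⊆ Lperp E Λ)
    (ν : V → Circle)
    (hν : ∀ a ∈ Λ, ∀ c ∈ Λ, ν (a + c) = ν a * ν c * Circle.exp (π * E a c)) :
    (∀ (M : V ≃ₗ[ℝ] V), (∀ v w : V, E (M v) (M w) = E v w) → ∀ u : V,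
      (conjLnuSet E Λ ν M u = LnuSet Λ ν ↔
        ((⇑M) '' (Λ : Set V) = (Λ : Set V) ∧
          ∀ l ∈ Λ, ν (M l) * (ν l)⁻¹ = Circle.exp (2 * π * E u (M l))))) ∧
    (∀ (M : V ≃ₗ[ℝ] V), (∀ v w : V, E (M v) (M w) = E v w) →
      (⇑M) '' (Λ : Set V) = (Λ : Set V) →
      ∃ u₀ : V,
        (∀ l ∈ Λ, ν (M l) * (ν l)⁻¹ = Circle.exp (2 * π * E u₀ (M l))) ∧
        (∀ u₀' : V,
          (∀ l ∈ Λ, ν (M l) * (ν l)⁻¹ = Circle.exp (2 * π * E u₀' (M l))) →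
          u₀' - u₀ ∈ Lperp E Λ) ∧
        (∀ u : V, conjLnuSet E Λ ν M u = LnuSet Λ ν ↔
          ∃ μ ∈ Lperp E Λ, u = u₀ + μ)) := by
  refine ⟨fun M _ u => aux1 E Λ ν M u, ?_⟩
  intro M hM hMΛ
  have hMmem : ∀ l ∈ Λ, M l ∈ Λ := by
    intro l hl
    show M l ∈ (Λ : Set V)
    rw [← hMΛ]; exact ⟨l, hl, rfl⟩
  -- ν 0 = 1
  have hν0 : ν 0 = 1 := by
    have := hν 0 Λ.zero_mem 0 Λ.zero_mem
    simp only [add_zero, map_zero, LinearMap.zero_apply, mul_zero, Circle.exp_zero,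
      mul_one] at this
    have h := congrArg (fun z => z * (ν 0)⁻¹) this
    simpa [mul_assoc, eq_comm] using h
  -- χ l = ν (M l) * (ν l)⁻¹ is a character on Λ
  have hχ0 : ν (M 0) * (ν 0)⁻¹ = 1 := by simp [hν0]
  have hχadd : ∀ a ∈ Λ, ∀ c ∈ Λ,
      ν (M (a + c)) * (ν (a + c))⁻¹ = (ν (M a) * (ν a)⁻¹) * (ν (M c) * (ν c)⁻¹) := by
    intro a ha c hc
    have h1 : ν (M (a + c)) = ν (M a) * ν (M c) * Circle.exp (π * E a c) := by
      rw [map_add]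
      rw [hν (M a) (hMmem a ha) (M c) (hMmem c hc), hM]
    have h2 : ν (a + c) = ν a * ν c * Circle.exp (π * E a c) := hν a ha c hc
    rw [h1, h2]
    simp [mul_inv, mul_assoc, mul_comm, mul_left_comm]
  have hχneg : ∀ a ∈ Λ, ν (M (-a)) * (ν (-a))⁻¹ = (ν (M a) * (ν a)⁻¹)⁻¹ := by
    intro a ha
    have h := hχadd a ha (-a) (neg_mem ha)
    rw [add_neg_cancel, hχ0] at h
    have h2 := congrArg (fun z => (ν (M a) * (ν a)⁻¹)⁻¹ * z) h.symm
    simpa [mul_assoc, eq_comm] using h2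
  -- nondegeneracy: v ↦ (E v (M b i))_i is bijective
  have key : ∀ v : V, (∀ i, E v (M (b i)) = 0) → v = 0 := by
    intro v hv
    apply hnd
    intro w
    have hEv : E v = 0 := by
      apply (b.map M).ext
      intro i
      simpa [Module.Basis.map_apply] using hv i
    simp [hEv]
  let L : V →ₗ[ℝ] (Fin k → ℝ) := LinearMap.pi (fun i => E.flip (M (b i)))
  have hLapp : ∀ v i, L v i = E v (M (b i)) := fun v i => rfl
  have hLinj : Function.Injective L := by
    intro v w hvw
    have hsub : v - w = 0 := by
      apply key
      intro i
      have h := congrFun hvw i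
      rw [hLapp, hLapp] at h
      simp [map_sub, h]
    exact sub_eq_zero.mp hsub
  have hrankeq : Module.finrank ℝ V = Module.finrank ℝ (Fin k → ℝ) := by
    rw [Module.finrank_eq_card_basis b, Fintype.card_fin, Module.finrank_fin_fun]
  have hLsurj : Function.Surjective L :=
    (LinearMap.injective_iff_surjective_of_finrank_eq_finrank hrankeq).mp hLinj
  -- pick s i with Circle.exp (2 * π * s i) = χ (b i)
  have hbmem : ∀ i, b i ∈ Λ := by
    intro i
    rw [hb]
    exact AddSubgroup.subset_closure ⟨i, rfl⟩
  have hs : ∀ i : Fin k, ∃ s : ℝ,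
      Circle.exp (2 * π * s) = ν (M (b i)) * (ν (b i))⁻¹ := by
    intro i
    refine ⟨Complex.arg (ν (M (b i)) * (ν (b i))⁻¹ : Circle) / (2 * π), ?_⟩
    rw [mul_div_cancel₀]
    · exact Circle.exp_arg _
    · positivity
  choose s hsspec using hs
  obtain ⟨u₀, hu₀⟩ := hLsurj s
  have hu₀i : ∀ i, E u₀ (M (b i)) = s i := fun i => (hLapp u₀ i).symm.trans (congrFun hu₀ i)
  -- main property by closure induction
  have hmain : ∀ l ∈ Λ, ν (M l) * (ν l)⁻¹ = Circle.exp (2 * π * E u₀ (M l)) := by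
    intro l hl
    rw [hb] at hl
    induction hl using AddSubgroup.closure_induction with
    | mem x hx =>
      obtain ⟨i, rfl⟩ := hx
      rw [hu₀i i]
      exact (hsspec i).symm
    | zero => simpa using hχ0
    | add x y hx hy ihx ihy =>
      rw [← hb] at hx hy
      rw [hχadd x hx y hy, ihx, ihy, ← Circle.exp_add]
      congr 1
      simp only [map_add, LinearMap.add_apply]
      ring
    | neg x hx ihx =>
      rw [← hb] at hx
      rw [hχneg x hx, ihx, ← Circle.exp_neg]
      congr 1
      simp only [map_neg, LinearMap.neg_apply]
      ring
  -- uniqueness mod Lperp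
  have huniq : ∀ u₀' : V,
      (∀ l ∈ Λ, ν (M l) * (ν l)⁻¹ = Circle.exp (2 * π * E u₀' (M l))) →
      u₀' - u₀ ∈ Lperp E Λ := by
    intro u₀' hu₀' l hl
    have hlim : (l : V) ∈ (⇑M) '' (Λ : Set V) := by rw [hMΛ]; exact hl
    obtain ⟨l', hl', rfl⟩ := hlim
    have h3 : Circle.exp (2 * π * E u₀' (M l')) = Circle.exp (2 * π * E u₀ (M l')) :=
      (hu₀' l' hl').symm.trans (hmain l' hl')
    have h4 : Circle.exp (2 * π * E u₀' (M l') - 2 * π * E u₀ (M l')) = 1 := by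
      rw [sub_eq_add_neg, Circle.exp_add, h3, Circle.exp_neg, mul_inv_cancel]
    rw [Circle.exp_eq_one] at h4
    obtain ⟨n, hn⟩ := h4
    refine ⟨n, ?_⟩
    have h2pi : (2 * π : ℝ) ≠ 0 := by positivity
    have h5 : E u₀' (M l') - E u₀ (M l') = n := by
      apply mul_left_cancel₀ h2pi
      rw [mul_sub]
      rw [show (2 : ℝ) * π * E u₀' (M l') - 2 * π * E u₀ (M l') = n * (2 * π) from hn]
      ring
    simpa [map_sub, LinearMap.sub_apply] using h5
  refine ⟨u₀, hmain, huniq, ?_⟩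
  -- normalizer description
  intro u
  rw [aux1 E Λ ν M u]
  constructor
  · rintro ⟨-, hrel⟩
    exact ⟨u - u₀, huniq u hrel, by abel⟩
  · rintro ⟨μ, hμ, rfl⟩
    refine ⟨hMΛ, ?_⟩
    intro l hl
    obtain ⟨n, hn⟩ := hμ (M l) (hMmem l hl)
    rw [hmain l hl, map_add, LinearMap.add_apply, hn, mul_add, Circle.exp_add,
      Circle.exp_two_pi_mul_int, mul_one]


end Stmt11
end
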